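/- Let S be a locally finite circle packing with at most countably many accumulation points, and suppose the tangency graph G_S has an infinite connected component. Then there exists an infinite sequence of distinct disks s₀, s₁, … with sₙ tangent to sₙ₊₁ for all n, such that the sequence of centers either converges to a point of ℝ² which is an accumulation point of S, or tends to infinity (so that d(s₀, sₙ) → ∞). -/

import Mathlib

/-!
By Kőnig's lemma an infinite, locally finite component contains an injective ray of tangent
disks. If the disks of the ray accumulate at a point `q`, the ray converges to `q`: otherwise
its tails, which are connected, would run infinitely often between a small ball around `q` and
the outside of a larger one, and every one of the uncountably many intermediate spheres around
`q` would carry an accumulation point. If the disks of the ray do not accumulate anywhere, only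
finitely many of them meet any closed ball, so the ray escapes to infinity.
-/

open Set Filter

noncomputable section

/-- Points of the plane (Euclidean metric). -/
abbrev Pt := EuclideanSpace ℝ (Fin 2)

/-- The closed disk with center `s.1` and radius `s.2`. -/
def disk (s : Pt × ℝ) : Set Pt := Metric.closedBall s.1 s.2

/-- Two disks are tangent when the distance of centers equals the sum of the radii. -/
def Tangent (s t : Pt × ℝ) : Prop := dist s.1 t.1 = s.2 + t.2

/-- ℓ∞-distance between two points of the plane. -/
def dinf (x y : Pt) : ℝ := max |x 0 - y 0| |x 1 - y 1|

/-- ℓ∞-distance between two subsets of the plane. -/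
def sDistInf (A B : Set Pt) : ℝ := sInf (Set.image2 dinf A B)

/-- `a` and `b` are connected by a finite path of tangent disks of `S`. -/
def Conn (S : Set (Pt × ℝ)) (a b : Pt × ℝ) : Prop :=
  ∃ (n : ℕ) (f : ℕ → Pt × ℝ), f 0 = a ∧ f n = b ∧ (∀ i ≤ n, f i ∈ S) ∧
    ∀ i < n, Tangent (f i) (f (i+1))

/-- The accumulation points of a circle packing. -/
def accPts (S : Set (Pt × ℝ)) : Set Pt :=
  {z | ∀ ε > (0:ℝ), {s ∈ S | (disk s ∩ Metric.ball z ε).Nonempty}.Infinite}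

open Topology Relation

section Konig

variable {α : Type*} (r : α → α → Prop)

def reachableAvoiding (A : Set α) (v : α) : Set α :=
  {w | ReflTransGen (fun x y => r x y ∧ y ∉ A) v w}

lemma reachableAvoiding_empty (v : α) :
    reachableAvoiding r ∅ v = {w | ReflTransGen r v w} := by
  simp [reachableAvoiding]

/-- Split a path at its last visit to `v`. -/
lemma reachableAvoiding_subset_insert_biUnion (A : Set α) (v : α) :
    reachableAvoiding r A v ⊆ insert v
      (⋃ u ∈ {u | r v u ∧ u ∉ insert v A}, reachableAvoiding r (insert v A) u) := by
  intro w hw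
  induction hw with
  | refl => exact mem_insert v _
  | @tail b c _ hbc ih =>
    by_cases hcv : c = v
    · exact Or.inl hcv
    have hc : c ∉ insert v A := by simp [hcv, hbc.2]
    refine Or.inr (mem_iUnion₂.2 ?_)
    rcases ih with rfl | ih
    · exact ⟨c, ⟨hbc.1, hc⟩, ReflTransGen.refl⟩
    · obtain ⟨u, hu, hub⟩ := mem_iUnion₂.1 ih
      exact ⟨u, hu, ReflTransGen.tail hub ⟨hbc.1, hc⟩⟩

variable {r}

lemma exists_rel_reachableAvoiding_infinite (hfin : ∀ a, {b | r a b}.Finite) {A : Set α} {v : α}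
    (hv : (reachableAvoiding r A v).Infinite) :
    ∃ u, r v u ∧ u ∉ insert v A ∧ (reachableAvoiding r (insert v A) u).Infinite := by
  by_contra! h
  refine hv (Finite.subset (Finite.insert v ?_) (reachableAvoiding_subset_insert_biUnion r A v))
  exact ((hfin v).subset fun u hu => hu.1).biUnion fun u hu => h u hu.1 hu.2

/-- Kőnig's lemma: keep stepping to a neighbour from which infinitely many vertices remain
reachable without revisiting the path so far. -/
theorem exists_injective_chain (hfin : ∀ a, {b | r a b}.Finite) {a : α}
    (ha : {b | ReflTransGen r a b}.Infinite) :
    ∃ f : ℕ → α, Function.Injective f ∧ ∀ n, r (f n) (f (n + 1)) := by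
  have : Nonempty α := ⟨a⟩
  choose! next hrel hnew hinf using fun (p : α × Set α)
    (hp : (reachableAvoiding r p.2 p.1).Infinite) => exists_rel_reachableAvoiding_infinite hfin hp
  -- `p n = (current vertex, set of vertices already visited)`
  set p : ℕ → α × Set α := fun n => (fun q => (next q, insert q.1 q.2))^[n] (a, ∅)
  have hp_succ : ∀ n, p (n + 1) = (next (p n), insert (p n).1 (p n).2) := fun n =>
    Function.iterate_succ_apply' _ n _
  have hp_inf : ∀ n, (reachableAvoiding r (p n).2 (p n).1).Infinite := by
    intro n
    induction n with
    | zero => simpa [p, reachableAvoiding_empty] using ha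
    | succ n ih => rw [hp_succ]; exact hinf _ ih
  have hvisited : ∀ m n, m < n → (p m).1 ∈ (p n).2 := by
    intro m n hmn
    induction n, hmn using Nat.le_induction with
    | base => simp [hp_succ]
    | succ n _ ih => rw [hp_succ]; exact mem_insert_of_mem _ ih
  have hfresh : ∀ n, (p (n + 1)).1 ∉ (p (n + 1)).2 := fun n => by
    rw [hp_succ]; exact hnew _ (hp_inf n)
  have hne : ∀ m n, m < n → (p m).1 ≠ (p n).1 := by
    intro m n hmn heq
    obtain ⟨k, rfl⟩ := Nat.exists_eq_add_of_lt hmn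
    exact hfresh _ (heq ▸ hvisited m _ hmn)
  refine ⟨fun n => (p n).1, fun m n hmn => ?_, fun n => ?_⟩
  · by_contra h
    rcases Nat.lt_or_gt_of_ne h with h | h
    exacts [hne m n h hmn, hne n m h hmn.symm]
  · show r (p n).1 (p (n + 1)).1
    rw [hp_succ]; exact hrel _ (hp_inf n)

end Konig

def tangencyRel (S : Set (Pt × ℝ)) (s t : Pt × ℝ) : Prop :=
  s ∈ S ∧ t ∈ S ∧ t ≠ s ∧ Tangent s t

lemma Conn.reflTransGen_tangencyRel {S : Set (Pt × ℝ)} {a b : Pt × ℝ} (h : Conn S a b) :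
    ReflTransGen (tangencyRel S) a b := by
  obtain ⟨n, f, rfl, rfl, hS, hT⟩ := h
  suffices ∀ i ≤ n, ReflTransGen (tangencyRel S) (f 0) (f i) from this n le_rfl
  intro i hi
  induction i with
  | zero => exact ReflTransGen.refl
  | succ i ih =>
    by_cases heq : f (i + 1) = f i
    · exact heq ▸ ih (by omega)
    · exact (ih (by omega)).tail ⟨hS i (by omega), hS (i + 1) hi, heq, hT i (by omega)⟩

theorem exists_injective_tangency_chain {S : Set (Pt × ℝ)}
    (hlocfin : ∀ s ∈ S, {t ∈ S | t ≠ s ∧ Tangent s t}.Finite)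
    (hinf : ∃ s₀ ∈ S, {t | Conn S s₀ t}.Infinite) :
    ∃ f : ℕ → Pt × ℝ, Function.Injective f ∧ (∀ n, f n ∈ S) ∧
      ∀ n, Tangent (f n) (f (n + 1)) := by
  obtain ⟨s₀, -, hs₀⟩ := hinf
  have hfin : ∀ s, {t | tangencyRel S s t}.Finite := by
    intro s
    by_cases hs : s ∈ S
    · exact (hlocfin s hs).subset fun t ht => ⟨ht.2.1, ht.2.2⟩
    · simp [tangencyRel, hs]
  obtain ⟨f, hinj, hrel⟩ :=
    exists_injective_chain hfin (hs₀.mono fun t => Conn.reflTransGen_tangencyRel)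
  exact ⟨f, hinj, fun n => (hrel n).1, fun n => (hrel n).2.2.2⟩

lemma accPts_mono {S T : Set (Pt × ℝ)} (h : S ⊆ T) : accPts S ⊆ accPts T :=
  fun _ hz ε hε => (hz ε hε).mono fun _ hs => ⟨h hs.1, hs.2⟩

lemma Function.Injective.infinite_sep_range_iff {α β : Type*} {f : α → β}
    (hf : Function.Injective f) {P : β → Prop} :
    {s ∈ range f | P s}.Infinite ↔ {n | P (f n)}.Infinite := by
  rw [← infinite_image_iff hf.injOn]
  change _ ↔ (f '' (f ⁻¹' {s | P s})).Infinite
  rw [image_preimage_eq_range_inter]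
  rfl

/-- Otherwise finitely many balls, each meeting finitely many disks, would cover `K`. -/
lemma exists_mem_accPts_of_infinite {T : Set (Pt × ℝ)} {K : Set Pt} (hK : IsCompact K)
    (h : {s ∈ T | (disk s ∩ K).Nonempty}.Infinite) : ∃ q ∈ K, q ∈ accPts T := by
  by_contra! hK'
  have hloc : ∀ x ∈ K, ∃ ε > 0, {s ∈ T | (disk s ∩ Metric.ball x ε).Nonempty}.Finite :=
    fun x hx => by simpa [accPts] using hK' x hx
  choose ε hε hfin using hloc
  obtain ⟨t, ht⟩ := hK.elim_nhds_subcover' (fun x hx => Metric.ball x (ε x hx))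
    fun x hx => Metric.ball_mem_nhds x (hε x hx)
  refine h ((t.finite_toSet.biUnion fun x _ => hfin x x.2).subset ?_)
  rintro s ⟨hs, y, hys, hyK⟩
  obtain ⟨x, hxt, hyx⟩ := mem_iUnion₂.1 (ht hyK)
  exact mem_iUnion₂.2 ⟨x, hxt, hs, y, hys, hyx⟩

lemma Tangent.disk_inter_nonempty {s t : Pt × ℝ} (h : Tangent s t) (hs : 0 ≤ s.2)
    (ht : 0 ≤ t.2) : (disk s ∩ disk t).Nonempty := by
  obtain ⟨z, hsz, hzt⟩ := exists_dist_le_le hs ht (h.trans (add_comm _ _)).le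
  exact ⟨z, by rwa [dist_comm] at hsz, hzt⟩

lemma isPreconnected_iUnion_disk {f : ℕ → Pt × ℝ} (hrad : ∀ n, 0 ≤ (f n).2)
    (htan : ∀ n, Tangent (f n) (f (n + 1))) : IsPreconnected (⋃ n, disk (f n)) :=
  IsPreconnected.iUnion_of_chain (fun n => (convex_closedBall _ _).isPreconnected) fun n => by
    simpa only [Order.succ_eq_add_one] using (htan n).disk_inter_nonempty (hrad n) (hrad (n + 1))

lemma dist_le_two_mul_dinf (x y : Pt) : dist x y ≤ 2 * dinf x y := by
  have h0 := le_max_left |x 0 - y 0| |x 1 - y 1|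
  have h1 := le_max_right |x 0 - y 0| |x 1 - y 1|
  rw [EuclideanSpace.dist_eq, Fin.sum_univ_two, Real.sqrt_le_iff, Real.dist_eq, Real.dist_eq, dinf]
  constructor <;> nlinarith [abs_nonneg (x 0 - y 0), abs_nonneg (x 1 - y 1)]

lemma le_sDistInf {A B : Set Pt} (hA : A.Nonempty) (hB : B.Nonempty) {c : ℝ}
    (h : ∀ x ∈ A, ∀ y ∈ B, c ≤ dinf x y) : c ≤ sDistInf A B :=
  le_csInf (hA.image2 hB) (forall_mem_image2.2 h)

section Chain

variable {f : ℕ → Pt × ℝ}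

/-- Each connected tail of the chain meets both `ball q ρ` and the complement of `ball q r`,
hence the sphere of radius `ρ`; so infinitely many disks meet that compact sphere. -/
lemma exists_accPts_dist_eq_of_frequently (hrad : ∀ n, 0 ≤ (f n).2)
    (htan : ∀ n, Tangent (f n) (f (n + 1))) (hinj : Function.Injective f) {q : Pt}
    (hq : q ∈ accPts (range f)) {r : ℝ}
    (hfar : ∃ᶠ n in atTop, r ≤ dist (f n).1 q) {ρ : ℝ} (hρ : ρ ∈ Ioo 0 r) :
    ∃ p ∈ accPts (range f), dist p q = ρ := by
  obtain ⟨p, hp, hpacc⟩ : ∃ p ∈ Metric.sphere q ρ, p ∈ accPts (range f) := by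
    refine exists_mem_accPts_of_infinite (isCompact_sphere q ρ) ?_
    rw [hinj.infinite_sep_range_iff, ← Nat.frequently_atTop_iff_infinite, frequently_atTop]
    intro N
    obtain ⟨n₁, hn₁, a, ha, haq⟩ := (Nat.frequently_atTop_iff_infinite.2
      (hinj.infinite_sep_range_iff.1 (hq ρ hρ.1))).forall_exists_of_atTop N
    obtain ⟨n₂, hn₂, hb⟩ := hfar.forall_exists_of_atTop N
    have htail := isPreconnected_iUnion_disk (f := fun k => f (N + k)) (fun k => hrad _)
      (fun k => htan (N + k))
    have hmem : ∀ n ≥ N, disk (f n) ⊆ ⋃ k, disk (f (N + k)) := fun n hn =>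
      subset_iUnion_of_subset (n - N) (by rw [Nat.add_sub_cancel' hn])
    obtain ⟨x, hx, hxq⟩ := htail.intermediate_value (hmem n₁ hn₁ ha)
      (hmem n₂ hn₂ (Metric.mem_closedBall_self (hrad n₂)))
      (continuous_id.dist continuous_const).continuousOn
      ⟨(Metric.mem_ball.1 haq).le, hρ.2.le.trans hb⟩
    obtain ⟨k, hk⟩ := mem_iUnion.1 hx
    exact ⟨N + k, le_add_right le_rfl, x, hk, hxq⟩
  exact ⟨p, hpacc, hp⟩

theorem tendsto_of_mem_accPts (hrad : ∀ n, 0 ≤ (f n).2)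
    (htan : ∀ n, Tangent (f n) (f (n + 1))) (hinj : Function.Injective f) {q : Pt}
    (hq : q ∈ accPts (range f))
    (hcount : (accPts (range f)).Countable) :
    Tendsto (fun n => (f n).1) atTop (𝓝 q) := by
  refine Metric.tendsto_nhds.2 fun r hr => ?_
  by_contra hnear
  have hfar : ∃ᶠ n in atTop, r ≤ dist (f n).1 q := by
    simpa only [not_eventually, not_lt] using hnear
  have hsub : Ioo 0 r ⊆ (dist · q) '' accPts (range f) := fun ρ hρ =>
    exists_accPts_dist_eq_of_frequently hrad htan hinj hq hfar hρ
  exact not_le.2 hr (Cardinal.Real.Ioo_countable_iff.1 ((hcount.image _).mono hsub))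

lemma eventually_lt_norm_of_accPts_eq_empty (hinj : Function.Injective f)
    (hempty : accPts (range f) = ∅) (R : ℝ) :
    ∀ᶠ n in atTop, ∀ y ∈ disk (f n), R < ‖y‖ := by
  have hfin : ¬ {n | (disk (f n) ∩ Metric.closedBall 0 R).Nonempty}.Infinite := fun h => by
    obtain ⟨q, -, hq⟩ := exists_mem_accPts_of_infinite (isCompact_closedBall 0 R)
      (hinj.infinite_sep_range_iff.2 h)
    exact hempty.subset hq
  rw [← Nat.frequently_atTop_iff_infinite, not_frequently] at hfin
  filter_upwards [hfin] with n hn y hy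
  simpa using fun hyR => hn ⟨y, hy, mem_closedBall_zero_iff.2 hyR⟩

theorem tendsto_of_accPts_eq_empty (hrad : ∀ n, 0 ≤ (f n).2) (hinj : Function.Injective f)
    (hempty : accPts (range f) = ∅) :
    Tendsto (fun n => ‖(f n).1‖) atTop atTop ∧
      Tendsto (fun n => sDistInf (disk (f 0)) (disk (f n))) atTop atTop := by
  have hcenter : ∀ n, (f n).1 ∈ disk (f n) := fun n => Metric.mem_closedBall_self (hrad n)
  have hfar := eventually_lt_norm_of_accPts_eq_empty hinj hempty
  refine ⟨tendsto_atTop.2 fun R => (hfar R).mono fun n hn => (hn _ (hcenter n)).le,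
    tendsto_atTop.2 fun R => ?_⟩
  filter_upwards [hfar (2 * R + ‖(f 0).1‖ + (f 0).2)] with n hn
  refine le_sDistInf ⟨_, hcenter 0⟩ ⟨_, hcenter n⟩ fun x hx y hy => ?_
  have hx' : ‖x‖ ≤ ‖(f 0).1‖ + (f 0).2 := by
    simpa [add_comm] using norm_le_norm_add_const_of_dist_le (Metric.mem_closedBall.1 hx)
  have := hn y hy
  have := norm_sub_norm_le y x
  have := dist_le_two_mul_dinf x y
  rw [dist_comm, dist_eq_norm] at this
  linarith

end Chain

theorem stmt10_general (S : Set (Pt × ℝ))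
    (hrad : ∀ s ∈ S, 0 < s.2)
    (hlocfin : ∀ s ∈ S, {t ∈ S | t ≠ s ∧ Tangent s t}.Finite)
    (hacc : (accPts S).Countable)
    (hinf : ∃ s₀ ∈ S, {t | Conn S s₀ t}.Infinite) :
    ∃ f : ℕ → Pt × ℝ, Function.Injective f ∧ (∀ n, f n ∈ S) ∧
      (∀ n, Tangent (f n) (f (n+1))) ∧
      ((∃ q ∈ accPts S, Tendsto (fun n => (f n).1) atTop (nhds q)) ∨
        (Tendsto (fun n => ‖(f n).1‖) atTop atTop ∧
          Tendsto (fun n => sDistInf (disk (f 0)) (disk (f n))) atTop atTop)) := by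
  obtain ⟨f, hinj, hS, htan⟩ := exists_injective_tangency_chain hlocfin hinf
  have hrad' : ∀ n, 0 ≤ (f n).2 := fun n => (hrad _ (hS n)).le
  have hsub : accPts (range f) ⊆ accPts S := accPts_mono (range_subset_iff.2 hS)
  refine ⟨f, hinj, hS, htan, ?_⟩
  rcases (accPts (range f)).eq_empty_or_nonempty with hempty | ⟨q, hq⟩
  · exact Or.inr (tendsto_of_accPts_eq_empty hrad' hinj hempty)
  · exact Or.inl ⟨q, hsub hq, tendsto_of_mem_accPts hrad' htan hinj hq (hacc.mono hsub)⟩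

/-- a locally finite circle packing with at most countably many
accumulation points whose tangency graph has an infinite connected component
admits an infinite tangency path whose centers either converge to an
accumulation point or tend to infinity (in which case `d(s₀,sₙ) → ∞`). -/
theorem stmt10 (S : Set (Pt × ℝ))
    (hrad : ∀ s ∈ S, 0 < s.2)
    (hdisj : S.Pairwise fun s t => Disjoint (interior (disk s)) (interior (disk t)))
    (hlocfin : ∀ s ∈ S, {t ∈ S | t ≠ s ∧ Tangent s t}.Finite)
    (hacc : (accPts S).Countable)
    (hinf : ∃ s₀ ∈ S, {t | Conn S s₀ t}.Infinite) :
    ∃ f : ℕ → Pt × ℝ, Function.Injective f ∧ (∀ n, f n ∈ S) ∧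
      (∀ n, Tangent (f n) (f (n+1))) ∧
      ((∃ q ∈ accPts S, Tendsto (fun n => (f n).1) atTop (nhds q)) ∨
        (Tendsto (fun n => ‖(f n).1‖) atTop atTop ∧
          Tendsto (fun n => sDistInf (disk (f 0)) (disk (f n))) atTop atTop)) :=
  stmt10_general S hrad hlocfin hacc hinf

end
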